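/- arXiv:1611.07055 — 6 statements merged into one kernel-verified Lean document; each statement's English description precedes it below -/
import Mathlib

section
/- Let C be the compressed tree of T formed from the heavy-path decomposition (the parent in C of v ≠ root is the first proper ancestor of v that is an apex of a heavy path). Then in C, every node w with parent v satisfies s_C(v) ≥ 2·s_C(w), where s_C is the descendant count in C. -/
/-- A finite rooted tree, given by a parent function and a depth function
witnessing acyclicity. The root is its own parent. -/
structure FinRootedTree (V : Type) [Fintype V] [DecidableEq V] where
  parent : V → V
  root : V
  parent_root : parent root = root
  depth : V → ℕ
  depth_root : depth root = 0
  depth_parent : ∀ v, v ≠ root → depth (parent v) + 1 = depth v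

namespace FinRootedTree

variable {V : Type} [Fintype V] [DecidableEq V]

/-- `a` is an ancestor of `v` (every node is an ancestor of itself). -/
def IsAnc (T : FinRootedTree V) (a v : V) : Prop := ∃ k : ℕ, T.parent^[k] v = a

/-- `w` is a child of `v`. -/
def IsChild (T : FinRootedTree V) (v w : V) : Prop := T.parent w = v ∧ w ≠ T.root

/-- The number of descendants of `v` (a node is a descendant of itself). -/
noncomputable def s (T : FinRootedTree V) (v : V) : ℕ := Nat.card {w : V // T.IsAnc v w}

/-- The height of the tree: maximum number of edges on a root-to-leaf path. -/
noncomputable def height (T : FinRootedTree V) : ℕ := Finset.univ.sup T.depth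

/-- `a` is the nearest common ancestor of `x` and `y`. -/
def IsNca (T : FinRootedTree V) (x y a : V) : Prop :=
  T.IsAnc a x ∧ T.IsAnc a y ∧ ∀ b, T.IsAnc b x → T.IsAnc b y → T.IsAnc b a

/-- The edge from `v` to its child `w` is heavy: `s(w) > s(v)/2`. -/
def HeavyEdge (T : FinRootedTree V) (v w : V) : Prop :=
  T.IsChild v w ∧ 2 * T.s w > T.s v

/-- `u` and `v` lie on the same heavy path: they are connected after
deleting every edge between a light child and its parent. -/
def SameHP (T : FinRootedTree V) : V → V → Prop :=
  Relation.EqvGen (fun u v => T.HeavyEdge u v ∨ T.HeavyEdge v u)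

end FinRootedTree

/-- A node is an apex if it is not a heavy child of its parent. -/
def FinRootedTree.IsApex {V : Type} [Fintype V] [DecidableEq V]
    (T : FinRootedTree V) (v : V) : Prop :=
  v = T.root ∨ 2 * T.s v ≤ T.s (T.parent v)

namespace FinRootedTree

variable {V : Type} [Fintype V] [DecidableEq V] (T : FinRootedTree V)

lemma isAnc_refl (v : V) : T.IsAnc v v := ⟨0, rfl⟩

lemma isAnc_trans {a b c : V} (h1 : T.IsAnc a b) (h2 : T.IsAnc b c) : T.IsAnc a c := by
  obtain ⟨j, hj⟩ := h1; obtain ⟨i, hi⟩ := h2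
  exact ⟨j + i, by rw [Function.iterate_add_apply, hi, hj]⟩

lemma parent_iterate_root (k : ℕ) : T.parent^[k] T.root = T.root := by
  induction k with
  | zero => rfl
  | succ k ih => rw [Function.iterate_succ_apply', ih, T.parent_root]

lemma isAnc_root {u : V} (h : T.IsAnc u T.root) : u = T.root := by
  obtain ⟨k, hk⟩ := h; rw [parent_iterate_root] at hk; exact hk.symm

lemma iterate_eq_or_depth_lt (k : ℕ) (x : V) :
    T.parent^[k] x = x ∨ T.depth (T.parent^[k] x) < T.depth x := by
  induction k with
  | zero => exact Or.inl rfl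
  | succ k ih =>
    rw [Function.iterate_succ_apply']
    by_cases hy : T.parent^[k] x = T.root
    · rw [hy, T.parent_root]
      rcases ih with h | h
      · exact Or.inl (hy.symm.trans h)
      · right; rwa [hy] at h
    · right
      have hd := T.depth_parent _ hy
      rcases ih with h | h
      · rw [h] at hd ⊢; omega
      · omega

lemma isAnc_depth_lt {a x : V} (h : T.IsAnc a x) (hne : a ≠ x) :
    T.depth a < T.depth x := by
  obtain ⟨k, hk⟩ := h
  rcases T.iterate_eq_or_depth_lt k x with h' | h'
  · exact absurd (hk.symm.trans h') hne
  · rwa [hk] at h'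

lemma s_mono {a b : V} (h : T.IsAnc a b) : T.s b ≤ T.s a := by
  apply Nat.card_le_card_of_injective
    (fun x : {w : V // T.IsAnc b w} => (⟨x.1, T.isAnc_trans h x.2⟩ : {w : V // T.IsAnc a w}))
  intro x y hxy
  exact Subtype.ext (by simpa using hxy)

end FinRootedTree

/-- In the compressed tree `C` of `T` (same node set and root; the parent of any
`v ≠ root` is the first proper ancestor of `v` in `T` that is an apex), every
node `w` with parent `v` satisfies `s_C(v) ≥ 2 * s_C(w)`. -/
theorem stmt_3 {V : Type} [Fintype V] [DecidableEq V] (T C : FinRootedTree V)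
    (hroot : C.root = T.root)
    (hpar : ∀ v, v ≠ T.root →
      T.IsApex (C.parent v) ∧ C.parent v ≠ v ∧ T.IsAnc (C.parent v) v ∧
      ∀ a, T.IsApex a → a ≠ v → T.IsAnc a v → T.IsAnc a (C.parent v)) :
    ∀ v w, C.IsChild v w → 2 * C.s w ≤ C.s v := by
  -- the C-parent of any node is a T-ancestor of it
  have hCparent_anc : ∀ x : V, T.IsAnc (C.parent x) x := by
    intro x
    by_cases hx : x = T.root
    · subst hx
      have h1 : C.parent T.root = T.root := by rw [← hroot, C.parent_root, hroot]
      rw [h1]; exact T.isAnc_refl _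
    · exact (hpar x hx).2.2.1
  -- C-ancestors are T-ancestors
  have hCT : ∀ (u x : V), C.IsAnc u x → T.IsAnc u x := by
    have key : ∀ (k : ℕ) (x : V), T.IsAnc (C.parent^[k] x) x := by
      intro k
      induction k with
      | zero => intro x; exact T.isAnc_refl x
      | succ k ih =>
        intro x
        rw [Function.iterate_succ_apply']
        exact T.isAnc_trans (hCparent_anc (C.parent^[k] x)) (ih x)
    rintro u x ⟨k, hk⟩
    exact hk ▸ key k x
  -- T-ancestry from an apex implies C-ancestry
  have hTC : ∀ (n : ℕ) (u x : V), T.depth x ≤ n → T.IsApex u → T.IsAnc u x →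
      C.IsAnc u x := by
    intro n
    induction n with
    | zero =>
      intro u x hd hu hanc
      by_cases hxu : x = u
      · exact hxu ▸ C.isAnc_refl x
      · exfalso
        have hxr : x ≠ T.root := by
          intro h
          exact hxu (by rw [h]; exact (T.isAnc_root (h ▸ hanc)).symm)
        obtain ⟨_, hne, hanc', _⟩ := hpar x hxr
        have := T.isAnc_depth_lt hanc' hne
        omega
    | succ n ih =>
      intro u x hd hu hanc
      by_cases hxu : x = u
      · exact hxu ▸ C.isAnc_refl x
      · have hxr : x ≠ T.root := by
          intro h
          exact hxu (by rw [h]; exact (T.isAnc_root (h ▸ hanc)).symm)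
        obtain ⟨_, hne, hanc', hmax⟩ := hpar x hxr
        have hlt : T.depth (C.parent x) < T.depth x := T.isAnc_depth_lt hanc' hne
        have h1 : T.IsAnc u (C.parent x) :=
          hmax u hu (fun h => hxu h.symm) hanc
        have h2 : C.IsAnc u (C.parent x) := ih u (C.parent x) (by omega) hu h1
        exact C.isAnc_trans h2 ⟨1, by simp⟩
  intro v w hcw
  obtain ⟨hpw, hwroot⟩ := hcw
  subst hpw
  have hwTroot : w ≠ T.root := by rwa [hroot] at hwroot
  obtain ⟨hapexv, hvne, hvanc, hvmax⟩ := hpar w hwTroot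
  -- s_T v ≤ s_C v since v is an apex
  have hsv : T.s (C.parent w) ≤ C.s (C.parent w) := by
    apply Nat.card_le_card_of_injective
      (fun x : {y : V // T.IsAnc (C.parent w) y} =>
        (⟨x.1, hTC (T.depth x.1) (C.parent w) x.1 le_rfl hapexv x.2⟩ :
          {y : V // C.IsAnc (C.parent w) y}))
    intro x y hxy
    exact Subtype.ext (by simpa using hxy)
  by_cases hw : T.IsApex w
  · -- w is an apex: use the light-edge inequality in T
    have hlight : 2 * T.s w ≤ T.s (T.parent w) := by
      rcases hw with h | h
      · exact absurd h hwTroot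
      · exact h
    -- C.parent w is a T-ancestor of T.parent w
    have hanc2 : T.IsAnc (C.parent w) (T.parent w) := by
      obtain ⟨k, hk⟩ := hvanc
      cases k with
      | zero =>
        simp only [Function.iterate_zero, id_eq] at hk
        exact absurd hk.symm hvne
      | succ j => exact ⟨j, by rw [← Function.iterate_succ_apply]; exact hk⟩
    have h2 : T.s (T.parent w) ≤ T.s (C.parent w) := T.s_mono hanc2
    have h3 : C.s w ≤ T.s w := by
      apply Nat.card_le_card_of_injective
        (fun x : {y : V // C.IsAnc w y} => (⟨x.1, hCT w x.1 x.2⟩ : {y : V // T.IsAnc w y}))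
      intro x y hxy
      exact Subtype.ext (by simpa using hxy)
    omega
  · -- w is a heavy child: s_C w = 1
    have hsw : ∀ x : V, C.IsAnc w x → x = w := by
      rintro x ⟨k, hk⟩
      cases k with
      | zero => exact hk
      | succ j =>
        exfalso
        rw [Function.iterate_succ_apply'] at hk
        by_cases hy : C.parent^[j] x = T.root
        · rw [hy] at hk
          have h1 : C.parent T.root = T.root := by rw [← hroot, C.parent_root, hroot]
          exact hwTroot (hk.symm.trans h1)
        · exact hw (hk ▸ (hpar _ hy).1)
    have hswle : C.s w ≤ 1 := by
      have : C.s w ≤ Nat.card PUnit.{1} := by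
        apply Nat.card_le_card_of_injective (fun _ : {y : V // C.IsAnc w y} => PUnit.unit.{1})
        intro x y _
        exact Subtype.ext ((hsw x.1 x.2).trans (hsw y.1 y.2).symm)
      simpa using this
    have hsvge : 2 ≤ C.s (C.parent w) := by
      have : Nontrivial {y : V // C.IsAnc (C.parent w) y} := by
        refine ⟨⟨C.parent w, C.isAnc_refl _⟩, ⟨w, ⟨1, by simp⟩⟩, ?_⟩
        intro h
        exact hvne (congrArg Subtype.val h)
      have h2 := Finite.one_lt_card_iff_nontrivial.mpr this
      show 2 ≤ Nat.card {y : V // C.IsAnc (C.parent w) y}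
      omega
    omega
end

section
/- Under the fat preorder hypotheses, if w' is the parent of a node w, then any node x descending from w' and any node y not descending from w' satisfy |p(x) − p(y)| > σ(w')^e. -/
/-- Under the fat preorder hypotheses, if `w'` is the parent of a node `w`, then
any descendant `x` of `w'` and non-descendant `y` of `w'` satisfy
`|p x - p y| > σ(w')^e`. -/
theorem stmt_7 {V : Type} [Fintype V] [DecidableEq V] (T : FinRootedTree V)
    (e : ℕ) (σ p q pbar qbar : V → ℤ)
    (hi : ∀ v w, T.IsAnc v w ↔ p w ∈ Set.Ico (p v) (q v))
    (hii : ∀ v w, p w ∉ Set.Ico (pbar v) (p v) ∪ Set.Ico (q v) (qbar v))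
    (hiii : ∀ v, p v - pbar v = σ v ^ e ∧ qbar v - q v = σ v ^ e)
    (w w' x y : V) (hch : T.IsChild w' w)
    (hx : T.IsAnc w' x) (hy : ¬ T.IsAnc w' y) :
    |p x - p y| > σ w' ^ e := by
  have hxI : p x ∈ Set.Ico (p w') (q w') := (hi w' x).mp hx
  have hyI : p y ∉ Set.Ico (p w') (q w') := fun h => hy ((hi w' y).mpr h)
  have hyB := hii w' y
  obtain ⟨h1, h2⟩ := hiii w'
  simp only [Set.mem_Ico, Set.mem_union, not_or, not_and, not_lt] at hxI hyI hyB
  rcases lt_or_ge (p y) (p w') with hlt | hge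
  · have : p y < pbar w' := by
      by_contra h
      exact absurd (hyB.1 (not_lt.mp h)) (not_le.mpr hlt)
    have : p x - p y > σ w' ^ e := by omega
    calc |p x - p y| ≥ p x - p y := le_abs_self _
      _ > σ w' ^ e := this
  · have hq : q w' ≤ p y := by
      rcases lt_or_ge (p y) (q w') with h | h
      · exact absurd (hyI hge) (not_le.mpr h)
      · exact h
    have : qbar w' ≤ p y := hyB.2 hq
    have : p y - p x > σ w' ^ e := by omega
    calc |p x - p y| ≥ -(p x - p y) := neg_le_abs _
      _ = p y - p x := by ring
      _ > σ w' ^ e := this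
end

section
/- Let s be a function on a rooted tree with s(u) = 1 + Σ_{v child of u} s(v) and s(u) ≥ β·s(v) for every child v of u, where β > 1. Then for every internal node u and integer e > 1: s(u)^e ≥ β^{e-1} + β^{e-1}·Σ_{v child of u} s(v)^e. -/
/-- The set of children of `u`. -/
def FinRootedTree.children {V : Type} [Fintype V] [DecidableEq V]
    (T : FinRootedTree V) (u : V) : Finset V :=
  Finset.univ.filter (fun w => T.parent w = u ∧ w ≠ T.root)

/-!
Write `S = 1 + ∑ xᵢ` with `β xᵢ ≤ S`. Then `β^(e-1) xᵢ^e = (β xᵢ)^(e-1) xᵢ ≤ S^(e-1) xᵢ`, and,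
since an internal node has a child of size at least 1, `β ≤ S`, so `β^(e-1) ≤ S^(e-1)`.
Summing, the left-hand side is at most `S^(e-1) (1 + ∑ xᵢ) = S^e`.
-/

open Finset

theorem pow_mul_one_add_sum_pow_succ_le {ι : Type*} (s : Finset ι) (x : ι → ℝ) (β S : ℝ)
    (n : ℕ) (hS : S = 1 + ∑ i ∈ s, x i) (hβ₀ : 0 ≤ β) (hβS : β ≤ S)
    (hx₀ : ∀ i ∈ s, 0 ≤ x i) (hβx : ∀ i ∈ s, β * x i ≤ S) :
    β ^ n * (1 + ∑ i ∈ s, x i ^ (n + 1)) ≤ S ^ (n + 1) := by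
  have hterm : ∀ i ∈ s, β ^ n * x i ^ (n + 1) ≤ S ^ n * x i := fun i hi =>
    calc β ^ n * x i ^ (n + 1) = (β * x i) ^ n * x i := by ring
      _ ≤ S ^ n * x i := by
        have hβxi : 0 ≤ β * x i := mul_nonneg hβ₀ (hx₀ i hi)
        exact mul_le_mul_of_nonneg_right (pow_le_pow_left₀ hβxi (hβx i hi) n) (hx₀ i hi)
  calc β ^ n * (1 + ∑ i ∈ s, x i ^ (n + 1))
      = β ^ n + ∑ i ∈ s, β ^ n * x i ^ (n + 1) := by rw [mul_add, mul_one, mul_sum]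
    _ ≤ S ^ n + ∑ i ∈ s, S ^ n * x i :=
        add_le_add (pow_le_pow_left₀ hβ₀ hβS n) (sum_le_sum hterm)
    _ = S ^ (n + 1) := by rw [← mul_sum, ← mul_one_add, ← hS, pow_succ]

namespace FinRootedTree

variable {V : Type} [Fintype V] [DecidableEq V]

theorem isChild_of_mem_children {T : FinRootedTree V} {u v : V} (hv : v ∈ T.children u) :
    T.IsChild u v := by
  simpa [children, IsChild] using hv

end FinRootedTree

/-- If `s(u) = 1 + Σ_{v child of u} s(v)` and `s(u) ≥ β·s(v)` for every child
`v`, with `β > 1`, then for every internal node `u` and integer `e > 1`: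
`s(u)^e ≥ β^(e-1) + β^(e-1)·Σ_{v child of u} s(v)^e`. -/
theorem stmt_8 {V : Type} [Fintype V] [DecidableEq V] (T : FinRootedTree V)
    (β : ℝ) (hβ : 1 < β)
    (hsum : ∀ u, (T.s u : ℝ) = 1 + ∑ v ∈ T.children u, (T.s v : ℝ))
    (hβs : ∀ u v, T.IsChild u v → β * (T.s v : ℝ) ≤ (T.s u : ℝ))
    (u : V) (hu : (T.children u).Nonempty) (e : ℕ) (he : 1 < e) :
    β ^ (e - 1) + β ^ (e - 1) * ∑ v ∈ T.children u, (T.s v : ℝ) ^ e ≤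
      (T.s u : ℝ) ^ e := by
  have one_le_s : ∀ w, (1 : ℝ) ≤ T.s w := fun w => by
    rw [hsum w]
    linarith [sum_nonneg fun v (_ : v ∈ T.children w) => (T.s v).cast_nonneg (α := ℝ)]
  obtain ⟨v₀, hv₀⟩ := hu
  have hβu : β ≤ T.s u := by
    nlinarith [hβs u v₀ (T.isChild_of_mem_children hv₀), one_le_s v₀]
  obtain ⟨n, rfl⟩ : ∃ n, e = n + 1 := ⟨e - 1, by omega⟩
  rw [Nat.add_sub_cancel, ← mul_one_add]
  exact pow_mul_one_add_sum_pow_succ_le _ _ β _ n (hsum u) (by linarith) hβu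
    (fun v _ => (T.s v).cast_nonneg) (fun v hv => hβs u v (T.isChild_of_mem_children hv))
end

section
/- Let β > 1 be real and e > 1, c > 2 integers with 2/(β^{e-1} − 1) ≤ c − 2. If s(u) = 1 + Σ_{v ∈ U} s(v) where U is the set of children of u, and s(u) ≥ β·s(v) for all v ∈ U, then 1 + Σ_{v ∈ U} c·s(v)^e ≤ (c−2)·s(u)^e. -/
/-! With `γ = β^(e-1)`, the parameter condition says `c ≤ (c - 2) γ`. Since `s(v)^(e-1) ≤ s(u)^(e-1) / γ`,
each child contributes `c s(v)^e ≤ (c - 2) s(u)^(e-1) s(v)`; summing over the children, whose sizes add up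
to `s(u) - 1`, leaves a slack of `(c - 2) s(u)^(e-1) ≥ 1` below `(c - 2) s(u)^e`. -/

theorem add_two_le_mul_of_two_div_sub_one_le {γ d : ℝ} (hγ : 1 < γ) (h : 2 / (γ - 1) ≤ d) :
    d + 2 ≤ d * γ := by
  have h2 : 2 ≤ d * (γ - 1) := (div_le_iff₀ (sub_pos.mpr hγ)).mp h
  linarith [mul_sub_one d γ]

section OrderedSemiring

variable {R : Type*} [CommSemiring R] [PartialOrder R] [IsOrderedRing R]

theorem mul_pow_succ_le_of_mul_le {β x y c d : R} (n : ℕ) (hx : 0 ≤ x) (hβ : 0 ≤ β)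
    (hd : 0 ≤ d) (hxy : β * x ≤ y) (hc : c ≤ d * β ^ n) :
    c * x ^ (n + 1) ≤ d * y ^ n * x := by
  have hpow : c * x ^ n ≤ d * y ^ n :=
    calc c * x ^ n ≤ d * β ^ n * x ^ n := by gcongr
      _ = d * (β * x) ^ n := by ring
      _ ≤ d * y ^ n := by gcongr
  calc c * x ^ (n + 1) = c * x ^ n * x := by ring
    _ ≤ d * y ^ n * x := by gcongr

theorem sum_mul_pow_succ_le_of_mul_le {ι : Type*} (U : Finset ι) (x : ι → R) {β y c d : R}
    (n : ℕ) (hx : ∀ v ∈ U, 0 ≤ x v) (hβ : 0 ≤ β) (hd : 0 ≤ d) (hxy : ∀ v ∈ U, β * x v ≤ y)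
    (hc : c ≤ d * β ^ n) :
    ∑ v ∈ U, c * x v ^ (n + 1) ≤ d * y ^ n * ∑ v ∈ U, x v := by
  rw [Finset.mul_sum]
  exact Finset.sum_le_sum fun v hv =>
    mul_pow_succ_le_of_mul_le n (hx v hv) hβ hd (hxy v hv) hc

end OrderedSemiring

theorem one_add_mul_pow_mul_sub_one_le {R : Type*} [CommRing R] [PartialOrder R]
    [IsOrderedRing R] {d y : R} (n : ℕ) (hd : 1 ≤ d) (hy : 1 ≤ y) :
    1 + d * y ^ n * (y - 1) ≤ d * y ^ (n + 1) := by
  have hslack : 1 ≤ d * y ^ n := one_le_mul_of_one_le_of_one_le hd (one_le_pow₀ hy)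
  have hexpand : d * y ^ n * (y - 1) = d * y ^ (n + 1) - d * y ^ n := by ring
  rw [hexpand, add_sub, sub_le_iff_le_add, add_comm]
  exact add_le_add_right hslack _

theorem stmt_9_general {ι : Type} (U : Finset ι) (s : ι → ℕ) (su : ℕ)
    (β : ℝ) (e c : ℕ) (hβ : 1 < β) (he : 1 < e) (hc : 2 < c)
    (hparam : 2 / (β ^ (e - 1) - 1) ≤ (c : ℝ) - 2)
    (hsum : su = 1 + ∑ v ∈ U, s v)
    (hβs : ∀ v ∈ U, β * (s v : ℝ) ≤ (su : ℝ)) :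
    1 + ∑ v ∈ U, (c : ℝ) * (s v : ℝ) ^ e ≤ ((c : ℝ) - 2) * (su : ℝ) ^ e := by
  obtain ⟨n, rfl⟩ : ∃ n, e = n + 1 := ⟨e - 1, by omega⟩
  rw [Nat.add_sub_cancel] at hparam
  have hc' : (c : ℝ) ≤ ((c : ℝ) - 2) * β ^ n := by
    simpa using add_two_le_mul_of_two_div_sub_one_le (one_lt_pow₀ hβ (by omega)) hparam
  have hd : (1 : ℝ) ≤ c - 2 := by
    have : (3 : ℝ) ≤ c := by exact_mod_cast hc
    linarith
  have hchildren : ∑ v ∈ U, (s v : ℝ) = su - 1 := by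
    rw [hsum]; push_cast; ring
  have hsu : (1 : ℝ) ≤ su := by exact_mod_cast (show 1 ≤ su by omega)
  calc 1 + ∑ v ∈ U, (c : ℝ) * (s v : ℝ) ^ (n + 1)
      ≤ 1 + ((c : ℝ) - 2) * (su : ℝ) ^ n * ∑ v ∈ U, (s v : ℝ) := by
        gcongr
        exact sum_mul_pow_succ_le_of_mul_le U _ n (fun v _ => (s v).cast_nonneg)
          (by linarith) (by linarith) hβs hc'
    _ ≤ ((c : ℝ) - 2) * (su : ℝ) ^ (n + 1) := by
        rw [hchildren]
        exact one_add_mul_pow_mul_sub_one_le n hd hsu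

/-- Interval-packing bound: if `s(u) = 1 + Σ_{v ∈ U} s(v)`, `s(u) ≥ β·s(v)` for
all `v ∈ U`, with `β > 1`, `e > 1`, `c > 2` and `2/(β^(e-1)-1) ≤ c-2`, then
`1 + Σ_{v ∈ U} c·s(v)^e ≤ (c-2)·s(u)^e`. -/
theorem stmt_9 {ι : Type} (U : Finset ι) (s : ι → ℕ) (su : ℕ)
    (β : ℝ) (e c : ℕ) (hβ : 1 < β) (he : 1 < e) (hc : 2 < c)
    (hparam : 2 / (β ^ (e - 1) - 1) ≤ (c : ℝ) - 2)
    (hs1 : ∀ v ∈ U, 1 ≤ s v)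
    (hsum : su = 1 + ∑ v ∈ U, s v)
    (hβs : ∀ v ∈ U, β * (s v : ℝ) ≤ (su : ℝ)) :
    1 + ∑ v ∈ U, (c : ℝ) * (s v : ℝ) ^ e ≤ ((c : ℝ) - 2) * (su : ℝ) ^ e :=
  stmt_9_general U s su β e c hβ he hc hparam hsum hβs
end

section
/- For nodes x, y, z of a rooted tree T, if nca(x,z) = nca(y,z) then nca_{T_z}(x,y) = nca_T(x,y), where T_z is T rerooted at z. -/
namespace FinRootedTree

variable {V : Type} [Fintype V] [DecidableEq V]

/-- `a` lies on the tree path between `u` and `v`. -/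
def OnPath (T : FinRootedTree V) (u v a : V) : Prop :=
  (T.IsAnc a u ∨ T.IsAnc a v) ∧ ∀ c, T.IsAnc c u → T.IsAnc c v → T.IsAnc c a

/-- `a` is the nearest common ancestor of `x` and `y` in the tree rerooted at
`z`: the ancestors of a node `x` after rerooting at `z` are exactly the nodes on
the tree path from `z` to `x`. -/
def IsNcaRerooted (T : FinRootedTree V) (z x y a : V) : Prop :=
  T.OnPath x z a ∧ T.OnPath y z a ∧
  ∀ b, T.OnPath x z b → T.OnPath y z b → T.OnPath a z b

end FinRootedTree

theorem FinRootedTree.IsAnc.trans {V : Type} [Fintype V] [DecidableEq V]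
    {T : FinRootedTree V} {a b v : V} (h1 : T.IsAnc a b) (h2 : T.IsAnc b v) :
    T.IsAnc a v := by
  obtain ⟨j, hj⟩ := h1
  obtain ⟨k, hk⟩ := h2
  exact ⟨j + k, by rw [Function.iterate_add_apply, hk, hj]⟩

/-- If `nca(x,z) = nca(y,z)` then the nca of `x` and `y` in the tree rerooted
at `z` equals `nca(x,y)`. -/
theorem stmt_16 {V : Type} [Fintype V] [DecidableEq V] (T : FinRootedTree V)
    (x y z a c : V)
    (hxz : T.IsNca x z a) (hyz : T.IsNca y z a) (hxy : T.IsNca x y c) :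
    T.IsNcaRerooted z x y c := by
  have hac : T.IsAnc a c := hxy.2.2 a hxz.1 hyz.1
  refine ⟨⟨Or.inl hxy.1, fun b hbx hbz => (hxz.2.2 b hbx hbz).trans hac⟩,
    ⟨Or.inl hxy.2.1, fun b hby hbz => (hyz.2.2 b hby hbz).trans hac⟩,
    fun b hb1 hb2 => ⟨?_, fun d hdc hdz => hb1.2 d (hdc.trans hxy.1) hdz⟩⟩
  rcases hb1.1 with hbx | hbz
  · rcases hb2.1 with hby | hbz
    · exact Or.inl (hxy.2.2 b hbx hby)
    · exact Or.inr hbz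
  · exact Or.inr hbz
end

section
/- For nodes x, y, z of a rooted tree T, if nca(x,z) = nca(x,y) ≠ nca(y,z), then nca_{T_z}(x,y) = nca_T(y,z), where T_z is T rerooted at z. -/
/-- If `nca(x,z) = nca(x,y) ≠ nca(y,z)` then the nca of `x` and `y` in the tree
rerooted at `z` equals `nca(y,z)`. -/
theorem stmt_17 {V : Type} [Fintype V] [DecidableEq V] (T : FinRootedTree V)
    (x y z a b : V)
    (hxz : T.IsNca x z a) (hxy : T.IsNca x y a) (hyz : T.IsNca y z b)
    (hne : a ≠ b) :
    T.IsNcaRerooted z x y b := by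
  have trans : ∀ u v w : V, T.IsAnc u v → T.IsAnc w u → T.IsAnc w v := by
    rintro u v w ⟨k, hk⟩ ⟨j, hj⟩
    exact ⟨j + k, by rw [Function.iterate_add_apply, hk, hj]⟩
  have hab : T.IsAnc a b := hyz.2.2 a hxy.2.1 hxz.2.1
  refine ⟨⟨Or.inr hyz.2.1, fun c hcx hcz => trans _ _ _ hab (hxz.2.2 c hcx hcz)⟩,
    ⟨Or.inr hyz.2.1, fun c hcy hcz => hyz.2.2 c hcy hcz⟩, ?_⟩
  rintro c ⟨hc1, hc2⟩ ⟨hd1, hd2⟩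
  have hbc : T.IsAnc b c := hd2 b hyz.1 hyz.2.1
  refine ⟨?_, fun d hdb _ => trans _ _ _ hbc hdb⟩
  rcases hc1 with hcx | hcz
  · rcases hd1 with hcy | hcz
    · exact Or.inl (trans _ _ _ hab (hxy.2.2 c hcx hcy))
    · exact Or.inr hcz
  · exact Or.inr hcz
end
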